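/- Let 𝕜 be a commutative ring, G a finite group, and n ≥ 1. The functionals f_{[P,g]} : V^{⊗k} → 𝕜, as [P,g] ranges over the equivalence classes of G-partitions of type (0;k) whose underlying partition has at most n parts, form a basis of the 𝕜-module of 𝕜[G_n]-module homomorphisms from V^{⊗k} to the trivial module 𝕜. -/

import Mathlib

/-!
The standard basis `B` of `V^{⊗k}` consists of the tuples `v : Fin k → G × Fin n`, and an
invariant functional is the same as a function on `B` constant on `G_n`-orbits. The orbits are
exactly the nonempty sets `O_{P,g}`: a tuple determines `P` as the pattern of coinciding
positions and `g` up to left multiplication on each part, and `G_n` can move any tuple of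
`O_{P,g}` to any other by permuting the positions and then correcting the labels part by part.
So the `O_{P,g}` with at most `n` parts partition `B`, and the indicator functionals of the
blocks of a partition of a finite set form a basis of the functionals constant on the blocks.
-/

namespace GPC

variable (G : Type*) [Group G]

def wreathAut (n : ℕ) : Equiv.Perm (Fin n) →* MulAut (Fin n → G) where
  toFun π :=
    { toFun := fun g => g ∘ ⇑π⁻¹
      invFun := fun g => g ∘ ⇑π
      left_inv := fun g => by funext i; simp
      right_inv := fun g => by funext i; simp
      map_mul' := fun g h => rfl }
  map_one' := by ext g i; simp
  map_mul' := fun π σ => by ext g i; simp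

/-- The wreath product `G_n = Gⁿ ⋊ S_n`. -/
abbrev Wr (n : ℕ) := (Fin n → G) ⋊[wreathAut G n] Equiv.Perm (Fin n)

variable {G}

/-- Equivalence of `G`-partitions with the same underlying partition `P`
(a set partition is encoded as a `Setoid`, whose classes are the parts):
`(P, g) ∼ (P, g')` iff for every part there is `t ∈ G` with `g' = t * g` on that part. -/
def LabelEquiv {X : Type*} (P : Setoid X) (g g' : X → G) : Prop :=
  ∀ a : X, ∃ t : G, ∀ b : X, P a b → g' b = t * g b

/-- The number of parts of a set partition (encoded as a `Setoid`). -/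
noncomputable def numParts {X : Type*} (P : Setoid X) : ℕ := Nat.card (Quotient P)

variable (G) in
/-- The image of the basis vector `g e_i` of `V` under the action of `γ ∈ G_n`:
`(h π) · (g e_i) = h_{π i} g e_{π i}`. -/
def actBasis (n : ℕ) (γ : Wr G n) (p : G × Fin n) : G × Fin n :=
  (γ.left (γ.right p.2) * p.1, γ.right p.2)

variable (𝕜 : Type*) [CommRing 𝕜] (G) (n : ℕ)

/-- The diagonal action of `γ ∈ G_n` on `V^{⊗k}`, realized on the standard basis
of `V^{⊗k}` given by `k`-tuples of basis vectors of `V`. -/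
noncomputable def dAct (k : ℕ) (γ : Wr G n) :
    ((Fin k → G × Fin n) →₀ 𝕜) →ₗ[𝕜] ((Fin k → G × Fin n) →₀ 𝕜) :=
  Finsupp.lmapDomain 𝕜 𝕜 (fun v j => actBasis G n γ (v j))

variable [Fintype G]

variable {G}

/-- The set `O_{P,g}`. -/
def Oset (k : ℕ) (P : Setoid (Fin k)) (g : Fin k → G) : Set (Fin k → G × Fin n) :=
  {v | (∀ a b : Fin k, (v a).2 = (v b).2 ↔ P a b)
    ∧ ∀ a b : Fin k, P a b → (v a).1 * (g a)⁻¹ = (v b).1 * (g b)⁻¹}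

open scoped Classical in
/-- The functional `f_{[P,g]} : V^{⊗k} → 𝕜`, equal to `1` on basis vectors in `O_{P,g}`
and `0` on all other basis vectors. -/
noncomputable def fFun (k : ℕ) (P : Setoid (Fin k)) (g : Fin k → G) :
    ((Fin k → G × Fin n) →₀ 𝕜) →ₗ[𝕜] 𝕜 :=
  Finsupp.lift 𝕜 𝕜 _ fun v => if v ∈ Oset n k P g then (1 : 𝕜) else 0

variable (G)

/-- The `𝕜`-module `Hom_{𝕜[G_n]}(V^{⊗k}, 𝕜)` of homomorphisms of `𝕜[G_n]`-modules from
`V^{⊗k}` to the trivial module `𝕜`: those `𝕜`-linear functionals invariant under the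
action of `G_n`. -/
def invFunctionals (k : ℕ) : Submodule 𝕜 (((Fin k → G × Fin n) →₀ 𝕜) →ₗ[𝕜] 𝕜) where
  carrier := {f | ∀ (γ : Wr G n) (x : (Fin k → G × Fin n) →₀ 𝕜), f (dAct G 𝕜 n k γ x) = f x}
  add_mem' := by
    intro f g hf hg γ x
    simp [hf γ x, hg γ x]
  zero_mem' := by intro γ x; simp
  smul_mem' := by
    intro c f hf γ x
    simp [hf γ x]

end GPC

namespace IndexedPartition

variable {ι B : Type*} {S : ι → Set B}

theorem some_injective (hS : IndexedPartition S) : Function.Injective hS.some := fun i j h =>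
  hS.eq_of_mem (hS.some_mem i) (h ▸ hS.some_mem j)

theorem finite_index [Finite B] (hS : IndexedPartition S) : Finite ι :=
  .of_injective _ hS.some_injective

variable (𝕜 : Type*) [CommRing 𝕜]

theorem linearIndependent_lift_indicator (hS : IndexedPartition S) :
    LinearIndependent 𝕜 fun i => Finsupp.lift 𝕜 𝕜 B ((S i).indicator 1) := by
  classical
  refine LinearIndependent.of_comp
    (LinearMap.funLeft 𝕜 𝕜 hS.some ∘ₗ (Finsupp.llift 𝕜 𝕜 𝕜 B).symm.toLinearMap) ?_
  convert Pi.linearIndependent_single_one ι 𝕜 with j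
  ext i
  simp [LinearMap.funLeft, Set.indicator_apply, Pi.single_apply, hS.mem_iff_index_eq,
    hS.index_some]

theorem mem_span_lift_indicator [Finite ι] (hS : IndexedPartition S) {φ : (B →₀ 𝕜) →ₗ[𝕜] 𝕜}
    (hφ : ∀ i, ∀ b ∈ S i, φ (Finsupp.single b 1) = φ (Finsupp.single (hS.some i) 1)) :
    φ ∈ Submodule.span 𝕜 (Set.range fun i => Finsupp.lift 𝕜 𝕜 B ((S i).indicator 1)) := by
  classical
  have := Fintype.ofFinite ι
  suffices φ = ∑ i, φ (Finsupp.single (hS.some i) 1) • Finsupp.lift 𝕜 𝕜 B ((S i).indicator 1) by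
    rw [this]
    exact Submodule.sum_smul_mem _ _ fun i _ => Submodule.subset_span ⟨i, rfl⟩
  ext b
  simp [Set.indicator_apply, hS.mem_iff_index_eq, hφ _ b (hS.mem_index b)]

end IndexedPartition

namespace GPC

variable {G : Type*} [Group G] {n k : ℕ}

theorem numParts_ker_le {α β : Type*} [Finite β] (f : α → β) :
    numParts (Setoid.ker f) ≤ Nat.card β :=
  (Nat.card_congr (Setoid.quotientKerEquivRange f)).trans_le (Finite.card_subtype_le _)

theorem mem_Oset_ker (v : Fin k → G × Fin n) :
    v ∈ Oset n k (Setoid.ker fun a => (v a).2) (fun a => (v a).1) :=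
  ⟨fun _ _ => Iff.rfl, fun _ _ _ => by simp⟩

variable {P : Setoid (Fin k)} {g g' : Fin k → G} {v v' : Fin k → G × Fin n}

theorem eq_ker_of_mem_Oset (hv : v ∈ Oset n k P g) : P = Setoid.ker fun a => (v a).2 :=
  Setoid.ext fun a b => (hv.1 a b).symm

theorem mem_Oset_iff_labelEquiv (hv : v ∈ Oset n k P g) :
    v ∈ Oset n k P g' ↔ LabelEquiv P g' g := by
  refine ⟨fun hv' a => ⟨g a * (g' a)⁻¹, fun b hab => ?_⟩, fun hg => ⟨hv.1, fun a b hab => ?_⟩⟩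
  · have hb : (v b).1 = (v a).1 * (g a)⁻¹ * g b := by rw [hv.2 a b hab]; group
    have hb' : (v b).1 = (v a).1 * (g' a)⁻¹ * g' b := by rw [hv'.2 a b hab]; group
    calc g b = g a * (v a).1⁻¹ * (v b).1 := by rw [hb]; group
      _ = g a * (g' a)⁻¹ * g' b := by rw [hb']; group
  · obtain ⟨t, ht⟩ := hg a
    calc (v a).1 * (g' a)⁻¹ = (v a).1 * (g a)⁻¹ * t := by rw [ht a (P.refl a)]; group
      _ = (v b).1 * (g b)⁻¹ * t := by rw [hv.2 a b hab]
      _ = (v b).1 * (g' b)⁻¹ := by rw [ht b hab]; group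

theorem Oset_nonempty (P : Setoid (Fin k)) (g : Fin k → G) (hP : numParts P ≤ n) :
    (Oset n k P g).Nonempty := by
  have := Fintype.ofFinite (Quotient P)
  obtain ⟨e⟩ : Nonempty (Quotient P ↪ Fin n) := Function.Embedding.nonempty_of_card_le <| by
    simpa [numParts, Nat.card_eq_fintype_card] using hP
  exact ⟨fun a => (g a, e ⟦a⟧), fun a b => e.injective.eq_iff.trans Quotient.eq, by simp⟩

theorem mem_Oset_actBasis_iff (γ : Wr G n) :
    (fun j => actBasis G n γ (v j)) ∈ Oset n k P g ↔ v ∈ Oset n k P g := by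
  simp only [Oset, Set.mem_ofPred_eq, actBasis, γ.right.injective.eq_iff]
  refine and_congr_right fun hv => forall₂_congr fun a b => forall_congr' fun hab => ?_
  rw [(hv a b).2 hab, mul_assoc, mul_assoc, mul_right_inj]

theorem injective_lift_snd_of_mem_Oset (hv : v ∈ Oset n k P g) :
    Function.Injective (Quotient.lift (fun a => (v a).2) fun a b => (hv.1 a b).2) := by
  rintro ⟨a⟩ ⟨b⟩ h
  exact Quotient.sound ((hv.1 a b).1 h)

theorem exists_actBasis_eq_of_mem_Oset (hv : v ∈ Oset n k P g) (hv' : v' ∈ Oset n k P g) :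
    ∃ γ : Wr G n, ∀ j, actBasis G n γ (v j) = v' j := by
  obtain ⟨π, hπ⟩ := Equiv.Perm.exists_extending_pair _ _
    (injective_lift_snd_of_mem_Oset hv) (injective_lift_snd_of_mem_Oset hv')
  -- `π` moves the positions of the parts; the labels are then corrected part by part.
  have hfactor : (fun a => (v' a).1 * (v a).1⁻¹).FactorsThrough fun a => (v' a).2 := by
    intro a b hab
    have hab := (hv'.1 a b).1 hab
    calc (v' a).1 * (v a).1⁻¹ = (v' a).1 * (g a)⁻¹ * ((v a).1 * (g a)⁻¹)⁻¹ := by group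
      _ = (v' b).1 * (g b)⁻¹ * ((v b).1 * (g b)⁻¹)⁻¹ := by rw [hv.2 a b hab, hv'.2 a b hab]
      _ = (v' b).1 * (v b).1⁻¹ := by group
  refine ⟨⟨Function.extend (fun a => (v' a).2) (fun a => (v' a).1 * (v a).1⁻¹) 1, π⟩, fun j => ?_⟩
  have hπj : π (v j).2 = (v' j).2 := hπ ⟦j⟧
  simp [actBasis, hπj, hfactor.extend_apply]

variable (𝕜 : Type*) [CommRing 𝕜]

theorem fFun_eq_lift_indicator (P : Setoid (Fin k)) (g : Fin k → G) :
    fFun 𝕜 n k P g = Finsupp.lift 𝕜 𝕜 _ ((Oset n k P g).indicator 1) :=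
  rfl

theorem dAct_single (γ : Wr G n) (v : Fin k → G × Fin n) (c : 𝕜) :
    dAct G 𝕜 n k γ (Finsupp.single v c) = Finsupp.single (fun j => actBasis G n γ (v j)) c :=
  Finsupp.mapDomain_single

theorem fFun_mem_invFunctionals (P : Setoid (Fin k)) (g : Fin k → G) :
    fFun 𝕜 n k P g ∈ invFunctionals G 𝕜 n k := by
  classical
  intro γ x
  suffices fFun 𝕜 n k P g ∘ₗ dAct G 𝕜 n k γ = fFun 𝕜 n k P g from LinearMap.congr_fun this x
  ext v
  simp [fFun_eq_lift_indicator, dAct_single, Set.indicator_apply, mem_Oset_actBasis_iff]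

variable {𝕜}

theorem apply_single_eq_of_mem_Oset {φ : ((Fin k → G × Fin n) →₀ 𝕜) →ₗ[𝕜] 𝕜}
    (hφ : φ ∈ invFunctionals G 𝕜 n k) (hv : v ∈ Oset n k P g) (hv' : v' ∈ Oset n k P g) :
    φ (Finsupp.single v' 1) = φ (Finsupp.single v 1) := by
  obtain ⟨γ, hγ⟩ := exists_actBasis_eq_of_mem_Oset hv hv'
  rw [← hφ γ (Finsupp.single v 1), dAct_single, funext hγ]

theorem fFun_basis_general (𝕜 : Type*) [CommRing 𝕜]
    (G : Type*) [Group G] [Fintype G] (n : ℕ) (k : ℕ)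
    (ι : Type*) (F : ι → Setoid (Fin k) × (Fin k → G))
    -- `F` is a transversal of the equivalence classes with at most `n` parts:
    (hparts : ∀ i, numParts (F i).1 ≤ n)
    (hcover : ∀ (P : Setoid (Fin k)) (g : Fin k → G), numParts P ≤ n →
      ∃ i, (F i).1 = P ∧ LabelEquiv P (F i).2 g)
    (hinj : ∀ i j, (F i).1 = (F j).1 → LabelEquiv (F i).1 (F i).2 (F j).2 → i = j) :
    LinearIndependent 𝕜 (fun i => fFun 𝕜 n k (F i).1 (F i).2)
    ∧ Submodule.span 𝕜 (Set.range fun i => fFun 𝕜 n k (F i).1 (F i).2)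
        = invFunctionals G 𝕜 n k := by
  have hdisj : Pairwise fun i j =>
      Disjoint (Oset n k (F i).1 (F i).2) (Oset n k (F j).1 (F j).2) := by
    refine fun i j hij => Set.disjoint_left.2 fun v hvi hvj => hij ?_
    have hP : (F i).1 = (F j).1 := (eq_ker_of_mem_Oset hvi).trans (eq_ker_of_mem_Oset hvj).symm
    refine hinj i j hP ?_
    rw [hP]
    exact (mem_Oset_iff_labelEquiv hvj).1 (hP ▸ hvi)
  have hcov : ∀ v, ∃ i, v ∈ Oset n k (F i).1 (F i).2 := fun v => by
    obtain ⟨i, hP, hg⟩ := hcover _ _ ((numParts_ker_le fun a => (v a).2).trans (by simp))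
    exact ⟨i, hP ▸ (mem_Oset_iff_labelEquiv (mem_Oset_ker v)).2 hg⟩
  let hS := IndexedPartition.mk' _ hdisj (fun i => Oset_nonempty _ _ (hparts i)) hcov
  have := hS.finite_index
  refine ⟨?_, le_antisymm ?_ fun φ hφ => ?_⟩
  · simpa only [fFun_eq_lift_indicator] using hS.linearIndependent_lift_indicator 𝕜
  · exact Submodule.span_le.2 <| Set.range_subset_iff.2 fun i => fFun_mem_invFunctionals 𝕜 _ _
  · simpa only [fFun_eq_lift_indicator] using hS.mem_span_lift_indicator 𝕜
      fun i v hv => apply_single_eq_of_mem_Oset hφ (hS.some_mem i) hv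

theorem fFun_basis (𝕜 : Type*) [CommRing 𝕜]
    (G : Type*) [Group G] [Fintype G] (n : ℕ) (hn : 1 ≤ n) (k : ℕ)
    (ι : Type*) (F : ι → Setoid (Fin k) × (Fin k → G))
    -- `F` is a transversal of the equivalence classes with at most `n` parts:
    (hparts : ∀ i, numParts (F i).1 ≤ n)
    (hcover : ∀ (P : Setoid (Fin k)) (g : Fin k → G), numParts P ≤ n →
      ∃ i, (F i).1 = P ∧ LabelEquiv P (F i).2 g)
    (hinj : ∀ i j, (F i).1 = (F j).1 → LabelEquiv (F i).1 (F i).2 (F j).2 → i = j) :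
    LinearIndependent 𝕜 (fun i => fFun 𝕜 n k (F i).1 (F i).2)
    ∧ Submodule.span 𝕜 (Set.range fun i => fFun 𝕜 n k (F i).1 (F i).2)
        = invFunctionals G 𝕜 n k :=
  fFun_basis_general 𝕜 G n k ι F hparts hcover hinj

end GPC
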